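/- arXiv:math/9809174 — 3 statements merged into one kernel-verified Lean document; each statement's English description precedes it below -/
import Mathlib

section
/- For every integer m ≥ 2, the group presented by ⟨x, a₁ ∣ relation of H_m⟩ is isomorphic to the group I_m presented by ⟨x, a₁, a₂, …, a_m ∣ x = a₁a₂, x = a₂a₃, …, x = a_{m-1}a_m, x = a_m a₁⟩, where H_{2k} has relation x^k a₁ = a₁ x^k and H_{2k+1} has relation x^{k+1} = a₁ x^k a₁. -/
/-!
Solving the relations of `I_m` successively for `a₂, …, a_m` expresses every `aⱼ₊₁` as a
word `chain x a₁ j` in `x` and `a₁`, via `aⱼ₊₁ = aⱼ⁻¹ x`; this is a Tietze transformation that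
leaves only the last relation `x = a_m a₁`. Since `chain x a (j + 2) = x⁻¹ (chain x a j) x`,
the word `a_m` is a conjugate of `a₁` or `a₁⁻¹ x` by a power of `x`, and the leftover relation
becomes the relation of `H_m`.
-/

/-- Cyclic successor on `Fin m`. -/
def finCycSucc {m : ℕ} (i : Fin m) : Fin m :=
  ⟨(i.val + 1) % m, Nat.mod_lt _ i.pos⟩

/-- The relations of the presentation
`I_m = ⟨x, a₁, …, a_m ∣ x = a₁a₂, x = a₂a₃, …, x = a_m a₁⟩`,
where `Sum.inl i` is the generator `a_{i+1}` (for `i : Fin m`) and `Sum.inr ()` is `x`. -/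
def IRels (m : ℕ) : Set (FreeGroup (Fin m ⊕ Unit)) :=
  {r | ∃ i : Fin m,
    r = FreeGroup.of (Sum.inr ()) *
      (FreeGroup.of (Sum.inl i) * FreeGroup.of (Sum.inl (finCycSucc i)))⁻¹}

section Chain

variable {G : Type*} [Group G]

def chain (x a : G) : ℕ → G
  | 0 => a
  | j + 1 => (chain x a j)⁻¹ * x

@[simp]
lemma chain_zero (x a : G) : chain x a 0 = a := rfl

lemma chain_succ (x a : G) (j : ℕ) : chain x a (j + 1) = (chain x a j)⁻¹ * x := rfl

lemma chain_mul_chain_succ (x a : G) (j : ℕ) : chain x a j * chain x a (j + 1) = x := by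
  rw [chain_succ, mul_inv_cancel_left]

lemma map_chain {H : Type*} [Group H] (f : G →* H) (x a : G) (j : ℕ) :
    f (chain x a j) = chain (f x) (f a) j := by
  induction j with
  | zero => rfl
  | succ j ih => rw [chain_succ, chain_succ, map_mul, map_inv, ih]

lemma chain_add_two (x a : G) (j : ℕ) : chain x a (j + 2) = x⁻¹ * chain x a j * x := by
  rw [chain_succ, chain_succ, mul_inv_rev, inv_inv]

lemma chain_two_mul (x a : G) (j : ℕ) :
    chain x a (2 * j) = x ^ (-(j : ℤ)) * a * x ^ (j : ℤ) := by
  induction j with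
  | zero => simp
  | succ j ih =>
    rw [Nat.mul_succ, chain_add_two, ih]
    group

lemma eq_chain_two_mul_add_one_mul_iff (x a : G) (j : ℕ) :
    x = chain x a (2 * j + 1) * a ↔ x ^ (j + 1) * a = a * x ^ (j + 1) := by
  have hx : a * x ^ (j : ℤ) * x = a * x ^ (j + 1) := by group
  have hchain : a * x ^ (j : ℤ) * (chain x a (2 * j + 1) * a) = x ^ (j + 1) * a := by
    rw [chain_succ, chain_two_mul]
    group
  rw [← mul_right_inj (a * x ^ (j : ℤ)), hx, hchain, eq_comm]

lemma eq_chain_two_mul_mul_iff (x a : G) (k : ℕ) :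
    x = chain x a (2 * k) * a ↔ x ^ (k + 1) = a * x ^ k * a := by
  have hx : x ^ k * x = x ^ (k + 1) := (pow_succ x k).symm
  have hchain : x ^ k * (chain x a (2 * k) * a) = a * x ^ k * a := by
    rw [chain_two_mul]
    group
  rw [← mul_right_inj (x ^ k), hx, hchain]

end Chain

lemma PresentedGroup.lift_of_eq_one_of_mem {α : Type*} {rels : Set (FreeGroup α)}
    {r : FreeGroup α} (hr : r ∈ rels) :
    FreeGroup.lift (PresentedGroup.of (rels := rels)) r = 1 := by
  have hlift : FreeGroup.lift (PresentedGroup.of (rels := rels)) = PresentedGroup.mk rels :=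
    FreeGroup.ext_hom _ _ fun _ => FreeGroup.lift_apply_of
  rw [hlift, PresentedGroup.one_of_mem hr]

lemma finCycSucc_of_lt {m j : ℕ} (hj : j + 1 < m) :
    finCycSucc (⟨j, by omega⟩ : Fin m) = ⟨j + 1, hj⟩ := by
  simp [finCycSucc, Nat.mod_eq_of_lt hj]

lemma finCycSucc_of_eq {m j : ℕ} (hj : j + 1 = m) :
    finCycSucc (⟨j, by omega⟩ : Fin m) = ⟨0, by omega⟩ := by
  simp [finCycSucc, hj]

namespace IRels

variable {m : ℕ}

abbrev x (m : ℕ) : PresentedGroup (IRels m) := .of (.inr ())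

abbrev a (i : Fin m) : PresentedGroup (IRels m) := .of (.inl i)

lemma x_eq_a_mul_a (i : Fin m) : x m = a i * a (finCycSucc i) :=
  eq_of_mul_inv_eq_one (PresentedGroup.one_of_mem ⟨i, rfl⟩)

lemma a_eq_chain (hm : 0 < m) (j : ℕ) (hj : j < m) :
    a ⟨j, hj⟩ = chain (x m) (a ⟨0, hm⟩) j := by
  induction j with
  | zero => rfl
  | succ j ih =>
    rw [chain_succ, ← ih (by omega), eq_inv_mul_iff_mul_eq, ← finCycSucc_of_lt hj, ← x_eq_a_mul_a]

lemma x_eq_chain_mul (hm : 0 < m) : x m = chain (x m) (a ⟨0, hm⟩) (m - 1) * a ⟨0, hm⟩ := by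
  have hlast : m - 1 + 1 = m := by omega
  rw [← a_eq_chain hm _ (by omega), ← finCycSucc_of_eq hlast, ← x_eq_a_mul_a]

def lift (hm : 0 < m) {G : Type*} [Group G] (y b : G) (h : y = chain y b (m - 1) * b) :
    PresentedGroup (IRels m) →* G :=
  PresentedGroup.toGroup (rels := IRels m)
    (f := Sum.elim (fun i : Fin m => chain y b i) fun _ => y) <| by
    rintro _ ⟨⟨j, hj⟩, rfl⟩
    rw [map_mul, map_inv, mul_inv_eq_one, map_mul]
    simp only [FreeGroup.lift_apply_of, Sum.elim_inl, Sum.elim_inr]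
    rcases Nat.lt_or_ge (j + 1) m with hlt | hge
    · rw [finCycSucc_of_lt hlt, chain_mul_chain_succ]
    · obtain rfl : j = m - 1 := by omega
      rwa [finCycSucc_of_eq (by omega : m - 1 + 1 = m)]

variable (hm : 0 < m) {G : Type*} [Group G] {y b : G} (h : y = chain y b (m - 1) * b)

@[simp]
lemma lift_x : lift hm y b h (x m) = y := by
  rw [lift, PresentedGroup.toGroup.of]; rfl

@[simp]
lemma lift_a (i : Fin m) : lift hm y b h (a i) = chain y b i := by
  rw [lift, PresentedGroup.toGroup.of]; rfl

end IRels

def mulEquivIRelsOfRelatorIff {m : ℕ} (hm : 0 < m) (r : FreeGroup (Fin 2))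
    (hr : ∀ {G : Type} [Group G] (f : Fin 2 → G),
      FreeGroup.lift f r = 1 ↔ f 0 = chain (f 0) (f 1) (m - 1) * f 1) :
    PresentedGroup ({r} : Set (FreeGroup (Fin 2))) ≃* PresentedGroup (IRels m) :=
  let toI : PresentedGroup ({r} : Set (FreeGroup (Fin 2))) →* PresentedGroup (IRels m) :=
    PresentedGroup.toGroup (f := ![IRels.x m, IRels.a ⟨0, hm⟩]) <| by
      rintro _ rfl
      exact (hr _).2 (IRels.x_eq_chain_mul hm)
  let ofI := IRels.lift hm (.of 0) (.of 1)
    ((hr PresentedGroup.of).1 (PresentedGroup.lift_of_eq_one_of_mem (Set.mem_singleton r)))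
  have toI_x : toI (.of 0) = IRels.x m := PresentedGroup.toGroup.of _
  have toI_a : toI (.of 1) = IRels.a ⟨0, hm⟩ := PresentedGroup.toGroup.of _
  MonoidHom.toMulEquiv toI ofI
    (PresentedGroup.ext fun i => by fin_cases i <;> simp [ofI, toI_x, toI_a])
    (PresentedGroup.ext fun
      | .inl i => by simp [ofI, map_chain, toI_x, toI_a, ← IRels.a_eq_chain]
      | .inr () => by simp [ofI, toI_x])

/-- For every integer `m ≥ 2`, the group `H_m` (with presentation
`⟨x, a₁ ∣ x^k a₁ = a₁ x^k⟩` when `m = 2k`, and `⟨x, a₁ ∣ x^{k+1} = a₁ x^k a₁⟩`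
when `m = 2k+1`; generator `0` is `x`, generator `1` is `a₁`) is isomorphic to the
group `I_m = ⟨x, a₁, …, a_m ∣ x = a₁a₂, …, x = a_m a₁⟩`. -/
theorem H_iso_I (m : ℕ) (hm : 2 ≤ m) :
    (∀ k : ℕ, m = 2 * k →
      Nonempty
        ((PresentedGroup
            ({(FreeGroup.of 0) ^ k * FreeGroup.of 1 *
                (FreeGroup.of 1 * (FreeGroup.of 0) ^ k)⁻¹} : Set (FreeGroup (Fin 2)))) ≃*
          PresentedGroup (IRels m))) ∧
    (∀ k : ℕ, m = 2 * k + 1 →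
      Nonempty
        ((PresentedGroup
            ({(FreeGroup.of 0) ^ (k + 1) *
                (FreeGroup.of 1 * (FreeGroup.of 0) ^ k * FreeGroup.of 1)⁻¹} :
              Set (FreeGroup (Fin 2)))) ≃*
          PresentedGroup (IRels m))) := by
  constructor
  · rintro k rfl
    obtain ⟨j, rfl⟩ : ∃ j, k = j + 1 := ⟨k - 1, by omega⟩
    refine ⟨mulEquivIRelsOfRelatorIff (by omega) _ fun f => ?_⟩
    rw [show 2 * (j + 1) - 1 = 2 * j + 1 by omega, eq_chain_two_mul_add_one_mul_iff]
    simp only [map_mul, map_inv, map_pow, FreeGroup.lift_apply_of, mul_inv_eq_one]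
  · rintro k rfl
    refine ⟨mulEquivIRelsOfRelatorIff (by omega) _ fun f => ?_⟩
    rw [Nat.add_sub_cancel, eq_chain_two_mul_mul_iff]
    simp only [map_mul, map_inv, map_pow, FreeGroup.lift_apply_of, mul_inv_eq_one]
end

section
/- Let Γ be a finite directed graph with edge labels ≥ 3 containing no triangles. Then in the link L_Γ, every embedded cycle of length 4 consists entirely of middle edges (edges joining level 2 to level 3). -/
/-- The generators of the presentation `I_Γ` associated with a directed labeled graph
`Γ` on vertex set `ι`: a generator `xgen i j` for each directed edge `i → j`, a
generator `vgen i` for each vertex `i`, and generators `dgen i j k` (`3 ≤ k ≤ label`)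
for each directed edge `i → j`. -/
inductive GammaGen (ι : Type*) where
  | xgen (i j : ι)
  | vgen (i : ι)
  | dgen (i j : ι) (k : ℕ)

/-- `gSeq i j k` is the generator `d_k` of the local piece of the edge `i → j`, where
`d₁ = a_i`, `d₂ = a_j`, and `d_k` (`k ≥ 3`) are the extra generators. -/
def gSeq {ι : Type*} (i j : ι) (k : ℕ) : GammaGen ι :=
  if k = 1 then .vgen i else if k = 2 then .vgen j else .dgen i j k

/-- The triples `(w, g, h)` such that `w = g·h` is a relation of `I_Γ`: for each
directed edge `i → j` with label `m`, the cyclic relations `x_{ij} = d_k d_{k+1}`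
(`1 ≤ k ≤ m`, indices mod `m`). -/
def relTriplesGamma {ι : Type*} (E : ι → ι → Prop) (lab : ι → ι → ℕ) :
    Set (GammaGen ι × GammaGen ι × GammaGen ι) :=
  {t | ∃ i j, E i j ∧ ∃ k : ℕ, 1 ≤ k ∧ k ≤ lab i j ∧
        t = (.xgen i j, gSeq i j k, gSeq i j (k % lab i j + 1))}

/-- Vertices of the link `L_Γ`: a pair of vertices for each generator of `I_Γ`;
the Boolean is `true` for the barred vertex. -/
abbrev GammaVert (ι : Type*) := GammaGen ι × Bool

/-- Each relation `w = g·h` contributes the corner edges `{ḡ, h}`, `{w, g}`,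
`{h̄, w̄}` to the link. -/
def linkRelGamma {ι : Type*} (E : ι → ι → Prop) (lab : ι → ι → ℕ)
    (u v : GammaVert ι) : Prop :=
  ∃ t ∈ relTriplesGamma E lab,
    ((u, v) = ((t.2.1, true), (t.2.2, false)) ∨
     (u, v) = ((t.1, false), (t.2.1, false)) ∨
     (u, v) = ((t.2.2, true), (t.1, true)))

/-- The link `L_Γ` of the unique 0-cell of the 2-complex `K_Γ`. -/
def LinkGamma {ι : Type*} (E : ι → ι → Prop) (lab : ι → ι → ℕ) :
    SimpleGraph (GammaVert ι) :=
  SimpleGraph.fromRel (linkRelGamma E lab)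

/-- Levels of link vertices: barred `x`-generators at level 1, barred others at
level 2, unbarred others at level 3, unbarred `x`-generators at level 4. -/
def lvlGamma {ι : Type*} : GammaVert ι → ℕ
  | (.xgen _ _, true) => 1
  | (.xgen _ _, false) => 4
  | (_, true) => 2
  | (_, false) => 3

/-- A link edge is a middle edge when it joins a level-2 vertex to a level-3 vertex. -/
def IsMiddle {ι : Type*} (u v : GammaVert ι) : Prop :=
  (lvlGamma u = 2 ∧ lvlGamma v = 3) ∨ (lvlGamma u = 3 ∧ lvlGamma v = 2)

/-- Forbidden configuration of type A: a triangle of `Γ` with two edges oriented out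
of a common vertex (equivalently, a triangle containing a directed path of length 2
whose third edge closes it up non-cyclically; both orientations of the third edge
give isomorphic oriented graphs). -/
def TypeA {ι : Type*} (E : ι → ι → Prop) : Prop :=
  ∃ u v w : ι, u ≠ v ∧ u ≠ w ∧ v ≠ w ∧ E w u ∧ E w v ∧ (E u v ∨ E v u)

/-- Forbidden configuration of type B: four distinct vertices forming a 4-cycle with
alternating orientations. -/
def TypeB {ι : Type*} (E : ι → ι → Prop) : Prop :=
  ∃ p q r s : ι, p ≠ q ∧ p ≠ r ∧ p ≠ s ∧ q ≠ r ∧ q ≠ s ∧ r ≠ s ∧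
    E q p ∧ E q r ∧ E s p ∧ E s r

/-- `Γ` contains no triangles (as an undirected graph). -/
def TriangleFree {ι : Type*} (E : ι → ι → Prop) : Prop :=
  ¬∃ u v w : ι, u ≠ v ∧ u ≠ w ∧ v ≠ w ∧
    (E u v ∨ E v u) ∧ (E v w ∨ E w v) ∧ (E u w ∨ E w u)

/-! In the link, `x̄_e` and `x_e` are adjacent exactly to the barred, resp. unbarred, letters of
the cyclic word `d_1 ⋯ d_m` of the edge `e`, and the middle edges join `ḡ` to `h` when `h`
follows `g` in such a word. Only the vertex generators `a_i` occur in the words of several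
edges, so two distinct edges of the simple graph `Γ` share at most one letter.

Suppose a 4-cycle passes through `x_e` (or `x̄_e`), with neighbours the letters `g ≠ h` of `e`.
The opposite vertex cannot be another `x_{e'}`, since `e'` would share `g` and `h` with `e`. So
it is a letter `w` which is the common predecessor (or successor) of `g` and `h`, in the words
of edges `e₁` and `e₂`. The letters `w, g, h` pairwise share one of the edges `e₁, e₂, e`. If
exactly two of these edges coincided, the third one would share two letters with them; if all
three were distinct, the letters would be the vertex generators of a triangle of `Γ`. Hence
`e₁ = e₂`, and `g = h` because a letter has a unique successor and predecessor in a word. Every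
vertex of a 4-cycle is therefore a letter, and every edge between letters is a middle edge. -/

namespace SimpleGraph.Walk

variable {V : Type*} {G : SimpleGraph V}

lemma IsCycle.exists_adj_of_length_eq_four {v : V} {c : G.Walk v v} (hc : c.IsCycle)
    (hl : c.length = 4) :
    ∃ a b d, G.Adj v a ∧ G.Adj a b ∧ G.Adj b d ∧ G.Adj d v ∧ v ≠ b ∧ a ≠ d := by
  match c, hc, hl with
  | .cons h₁ (.cons h₂ (.cons h₃ (.cons h₄ .nil))), hc, _ =>
    have hnd := hc.support_nodup
    simp only [support_cons, support_nil, List.tail_cons, List.nodup_cons, List.mem_cons,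
      List.not_mem_nil, or_false, List.nodup_nil, and_true, not_or] at hnd
    exact ⟨_, _, _, h₁, h₂, h₃, h₄, fun h => hnd.2.1.2 h.symm, hnd.1.2.1⟩

lemma IsCycle.exists_adj_of_length_eq_four_of_mem_support {v u : V} {c : G.Walk v v}
    (hc : c.IsCycle) (hl : c.length = 4) (hu : u ∈ c.support) :
    ∃ a b d, G.Adj u a ∧ G.Adj a b ∧ G.Adj b d ∧ G.Adj d u ∧ u ≠ b ∧ a ≠ d := by
  classical
  exact (hc.rotate hu).exists_adj_of_length_eq_four (by rwa [length_rotate])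

end SimpleGraph.Walk

lemma mod_add_one_eq_ite {k m : ℕ} (hk : k ≤ m) :
    k % m + 1 = if k = m then 1 else k + 1 := by
  split_ifs with h
  · simp [h]
  · rw [Nat.mod_eq_of_lt (by omega)]

open GammaGen

section Generators

variable {ι : Type*}

lemma gSeq_ne_xgen (i j a b : ι) (k : ℕ) : gSeq i j k ≠ xgen a b := by
  unfold gSeq; split_ifs <;> simp

lemma gSeq_injective {i j : ι} (hij : i ≠ j) : Function.Injective (gSeq i j) := by
  intro k k' h
  unfold gSeq at h
  split_ifs at h <;> simp_all

lemma exists_vgen_of_gSeq_eq_gSeq {i j i' j' : ι} {k k' : ℕ} (h : gSeq i j k = gSeq i' j' k')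
    (hne : (i, j) ≠ (i', j')) : ∃ t, gSeq i j k = vgen t := by
  unfold gSeq at *; split_ifs at * <;> simp_all

lemma eq_or_eq_of_gSeq_eq_vgen {i j t : ι} {k : ℕ} (h : gSeq i j k = vgen t) : t = i ∨ t = j := by
  unfold gSeq at h; split_ifs at h <;> simp_all

end Generators

section EdgeGenerators

variable {ι : Type*} (E : ι → ι → Prop) (lab : ι → ι → ℕ)

def IsEdgeGen (e : ι × ι) (g : GammaGen ι) : Prop :=
  E e.1 e.2 ∧ ∃ k, 1 ≤ k ∧ k ≤ lab e.1 e.2 ∧ gSeq e.1 e.2 k = g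

/-- `x_e = g · h` is one of the relations of the edge `e`, so `(g, true)` and `(h, false)` are
joined by a middle edge of the link. -/
def IsEdgeSucc (e : ι × ι) (g h : GammaGen ι) : Prop :=
  E e.1 e.2 ∧ ∃ k, 1 ≤ k ∧ k ≤ lab e.1 e.2 ∧
    gSeq e.1 e.2 k = g ∧ gSeq e.1 e.2 (k % lab e.1 e.2 + 1) = h

variable {E lab} {e e' : ι × ι} {g h : GammaGen ι}

namespace IsEdgeGen

lemma ne_xgen (hg : IsEdgeGen E lab e g) (a b : ι) : g ≠ xgen a b := by
  obtain ⟨-, k, -, -, rfl⟩ := hg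
  exact gSeq_ne_xgen _ _ _ _ _

lemma exists_vgen (hg : IsEdgeGen E lab e g) (hg' : IsEdgeGen E lab e' g) (hne : e ≠ e') :
    ∃ t, g = vgen t := by
  obtain ⟨-, k, -, -, rfl⟩ := hg
  obtain ⟨-, k', -, -, h⟩ := hg'
  exact exists_vgen_of_gSeq_eq_gSeq h.symm hne

lemma mem_of_vgen {t : ι} (ht : IsEdgeGen E lab e (vgen t)) : t = e.1 ∨ t = e.2 := by
  obtain ⟨-, k, -, -, h⟩ := ht
  exact eq_or_eq_of_gSeq_eq_vgen h

lemma adj_of_vgen {s t : ι} (hs : IsEdgeGen E lab e (vgen s)) (ht : IsEdgeGen E lab e (vgen t))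
    (hst : s ≠ t) : E s t ∨ E t s := by
  have hE := hs.1
  rcases hs.mem_of_vgen with rfl | rfl <;> rcases ht.mem_of_vgen with rfl | rfl <;> simp_all

lemma edge_eq_of_ne (hsimple : ∀ i j, E i j → ¬E j i) (hg : IsEdgeGen E lab e g)
    (hh : IsEdgeGen E lab e h) (hg' : IsEdgeGen E lab e' g) (hh' : IsEdgeGen E lab e' h)
    (hgh : g ≠ h) : e = e' := by
  by_contra hne
  obtain ⟨s, rfl⟩ := hg.exists_vgen hg' hne
  obtain ⟨t, rfl⟩ := hh.exists_vgen hh' hne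
  rw [ne_eq, vgen.injEq] at hgh
  grind [Prod.ext_iff, hg.1, hg'.1, hg.mem_of_vgen, hh.mem_of_vgen, hg'.mem_of_vgen,
    hh'.mem_of_vgen]

end IsEdgeGen

namespace IsEdgeSucc

lemma isEdgeGen_left (hgh : IsEdgeSucc E lab e g h) : IsEdgeGen E lab e g := by
  obtain ⟨hE, k, hk₁, hk₂, hg, -⟩ := hgh
  exact ⟨hE, k, hk₁, hk₂, hg⟩

lemma isEdgeGen_right (hgh : IsEdgeSucc E lab e g h) : IsEdgeGen E lab e h := by
  obtain ⟨hE, k, hk₁, hk₂, -, hh⟩ := hgh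
  refine ⟨hE, _, by omega, ?_, hh⟩
  rw [mod_add_one_eq_ite hk₂]
  split_ifs <;> omega

lemma ne (hirr : ∀ i, ¬E i i) (hlab : 2 ≤ lab e.1 e.2) (hgh : IsEdgeSucc E lab e g h) :
    g ≠ h := by
  obtain ⟨hE, k, hk₁, hk₂, rfl, rfl⟩ := hgh
  intro heq
  have := gSeq_injective (fun h => hirr _ (h ▸ hE)) heq
  rw [mod_add_one_eq_ite hk₂] at this
  split_ifs at this <;> omega

lemma right_unique (hirr : ∀ i, ¬E i i) {h' : GammaGen ι} (hgh : IsEdgeSucc E lab e g h)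
    (hgh' : IsEdgeSucc E lab e g h') : h = h' := by
  obtain ⟨hE, k, -, -, rfl, rfl⟩ := hgh
  obtain ⟨-, k', -, -, hk, rfl⟩ := hgh'
  rw [gSeq_injective (fun h => hirr _ (h ▸ hE)) hk]

lemma left_unique (hirr : ∀ i, ¬E i i) {g' : GammaGen ι} (hgh : IsEdgeSucc E lab e g h)
    (hgh' : IsEdgeSucc E lab e g' h) : g = g' := by
  obtain ⟨hE, k, hk₁, hk₂, rfl, rfl⟩ := hgh
  obtain ⟨-, k', hk₁', hk₂', rfl, hk⟩ := hgh'
  have := gSeq_injective (fun h => hirr _ (h ▸ hE)) hk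
  rw [mod_add_one_eq_ite hk₂, mod_add_one_eq_ite hk₂'] at this
  congr 1
  split_ifs at this <;> omega

end IsEdgeSucc

lemma IsEdgeGen.edge_eq_of_triangle (hsimple : ∀ i j, E i j → ¬E j i) (htf : TriangleFree E)
    {eab eac ebc : ι × ι} {a b c : GammaGen ι} (hab : a ≠ b) (hac : a ≠ c) (hbc : b ≠ c)
    (ha : IsEdgeGen E lab eab a) (hb : IsEdgeGen E lab eab b)
    (ha' : IsEdgeGen E lab eac a) (hc : IsEdgeGen E lab eac c)
    (hb' : IsEdgeGen E lab ebc b) (hc' : IsEdgeGen E lab ebc c) : eab = eac := by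
  by_contra hne
  have hne₁ : eab ≠ ebc := by
    rintro rfl
    exact hne (ha.edge_eq_of_ne hsimple hc' ha' hc hac)
  have hne₂ : eac ≠ ebc := by
    rintro rfl
    exact hne (ha.edge_eq_of_ne hsimple hb ha' hb' hab)
  obtain ⟨s, rfl⟩ := ha.exists_vgen ha' hne
  obtain ⟨t, rfl⟩ := hb.exists_vgen hb' hne₁
  obtain ⟨u, rfl⟩ := hc.exists_vgen hc' hne₂
  simp only [ne_eq, vgen.injEq] at hab hac hbc
  exact htf ⟨s, t, u, hab, hac, hbc, ha.adj_of_vgen hb hab, hb'.adj_of_vgen hc' hbc,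
    ha'.adj_of_vgen hc hac⟩

end EdgeGenerators

section Link

variable {ι : Type*} {E : ι → ι → Prop} {lab : ι → ι → ℕ}

lemma linkRelGamma_cases {u v : GammaVert ι} (huv : linkRelGamma E lab u v) :
    (∃ e g h, IsEdgeSucc E lab e g h ∧ u = (g, true) ∧ v = (h, false)) ∨
    (∃ i j g, IsEdgeGen E lab (i, j) g ∧ u = (xgen i j, false) ∧ v = (g, false)) ∨
    (∃ i j g, IsEdgeGen E lab (i, j) g ∧ u = (g, true) ∧ v = (xgen i j, true)) := by
  obtain ⟨t, ⟨i, j, hE, k, hk₁, hk₂, rfl⟩, huv⟩ := huv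
  have hs : IsEdgeSucc E lab (i, j) (gSeq i j k) (gSeq i j (k % lab i j + 1)) :=
    ⟨hE, k, hk₁, hk₂, rfl, rfl⟩
  simp only [Prod.mk.injEq] at huv
  rcases huv with ⟨rfl, rfl⟩ | ⟨rfl, rfl⟩ | ⟨rfl, rfl⟩
  · exact Or.inl ⟨_, _, _, hs, rfl, rfl⟩
  · exact Or.inr (Or.inl ⟨i, j, _, hs.isEdgeGen_left, rfl, rfl⟩)
  · exact Or.inr (Or.inr ⟨i, j, _, hs.isEdgeGen_right, rfl, rfl⟩)

lemma linkGamma_adj_xgen {i j : ι} {b : Bool} {u : GammaVert ι}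
    (h : (LinkGamma E lab).Adj (xgen i j, b) u) :
    ∃ g, IsEdgeGen E lab (i, j) g ∧ u = (g, b) := by
  rw [LinkGamma, SimpleGraph.fromRel_adj] at h
  rcases h.2 with h | h <;> rcases linkRelGamma_cases h with
    ⟨e, g, h, hgh, h₁, h₂⟩ | ⟨i', j', g, hg, h₁, h₂⟩ | ⟨i', j', g, hg, h₁, h₂⟩ <;>
    simp only [Prod.mk.injEq, xgen.injEq] at h₁ h₂
  · exact absurd h₁.1.symm (hgh.isEdgeGen_left.ne_xgen i j)
  · obtain ⟨⟨rfl, rfl⟩, rfl⟩ := h₁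
    exact ⟨g, hg, h₂⟩
  · exact absurd h₁.1.symm (hg.ne_xgen i j)
  · exact absurd h₂.1.symm (hgh.isEdgeGen_right.ne_xgen i j)
  · exact absurd h₂.1.symm (hg.ne_xgen i j)
  · obtain ⟨⟨rfl, rfl⟩, rfl⟩ := h₂
    exact ⟨g, hg, h₁⟩

lemma linkGamma_adj_of_false {g : GammaGen ι} (hg : ∀ a b, g ≠ xgen a b) {u : GammaVert ι}
    (h : (LinkGamma E lab).Adj (g, false) u) :
    (∃ e w, IsEdgeSucc E lab e w g ∧ u = (w, true)) ∨
      ∃ i j, IsEdgeGen E lab (i, j) g ∧ u = (xgen i j, false) := by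
  rw [LinkGamma, SimpleGraph.fromRel_adj] at h
  rcases h.2 with h | h <;> rcases linkRelGamma_cases h with
    ⟨e, w, g', hwg, h₁, h₂⟩ | ⟨i, j, g', hg', h₁, h₂⟩ | ⟨i, j, g', hg', h₁, h₂⟩ <;>
    simp only [Prod.mk.injEq, Bool.false_eq_true, and_false, and_true] at h₁ h₂
  · exact absurd h₁ (hg i j)
  · subst h₂
    exact Or.inl ⟨e, w, hwg, h₁⟩
  · subst h₂
    exact Or.inr ⟨i, j, hg', h₁⟩

lemma linkGamma_adj_of_true {g : GammaGen ι} (hg : ∀ a b, g ≠ xgen a b) {u : GammaVert ι}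
    (h : (LinkGamma E lab).Adj (g, true) u) :
    (∃ e w, IsEdgeSucc E lab e g w ∧ u = (w, false)) ∨
      ∃ i j, IsEdgeGen E lab (i, j) g ∧ u = (xgen i j, true) := by
  rw [LinkGamma, SimpleGraph.fromRel_adj] at h
  rcases h.2 with h | h <;> rcases linkRelGamma_cases h with
    ⟨e, g', w, hgw, h₁, h₂⟩ | ⟨i, j, g', hg', h₁, h₂⟩ | ⟨i, j, g', hg', h₁, h₂⟩ <;>
    simp only [Prod.mk.injEq, Bool.true_eq_false, and_false, and_true] at h₁ h₂
  · subst h₁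
    exact Or.inl ⟨e, w, hgw, h₂⟩
  · subst h₁
    exact Or.inr ⟨i, j, hg', h₂⟩
  · exact absurd h₂ (hg i j)

lemma lvlGamma_of_ne_xgen {g : GammaGen ι} (hg : ∀ a b, g ≠ xgen a b) (b : Bool) :
    lvlGamma (g, b) = if b then 2 else 3 := by
  cases g with
  | xgen i j => exact absurd rfl (hg i j)
  | vgen | dgen => cases b <;> rfl

lemma isMiddle_of_linkGamma_adj {u v : GammaVert ι} (h : (LinkGamma E lab).Adj u v)
    (hu : ∀ a b, u.1 ≠ xgen a b) (hv : ∀ a b, v.1 ≠ xgen a b) : IsMiddle u v := by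
  rw [LinkGamma, SimpleGraph.fromRel_adj] at h
  rcases h.2 with h | h <;> rcases linkRelGamma_cases h with
    ⟨e, g, g', -, rfl, rfl⟩ | ⟨i, j, g, -, rfl, -⟩ | ⟨i, j, g, -, -, rfl⟩
  · simp [IsMiddle, lvlGamma_of_ne_xgen hu, lvlGamma_of_ne_xgen hv]
  · exact absurd rfl (hu i j)
  · exact absurd rfl (hv i j)
  · simp [IsMiddle, lvlGamma_of_ne_xgen hu, lvlGamma_of_ne_xgen hv]
  · exact absurd rfl (hv i j)
  · exact absurd rfl (hu i j)

end Link

section FourCycles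

variable {ι : Type*} {E : ι → ι → Prop} {lab : ι → ι → ℕ}

lemma linkGamma_not_fourCycle_xgen_false (hirr : ∀ i, ¬E i i)
    (hsimple : ∀ i j, E i j → ¬E j i) (hlab : ∀ i j, E i j → 2 ≤ lab i j)
    (htf : TriangleFree E) {i j : ι} {a c d : GammaVert ι}
    (h₁ : (LinkGamma E lab).Adj (xgen i j, false) a) (h₂ : (LinkGamma E lab).Adj a c)
    (h₃ : (LinkGamma E lab).Adj c d) (h₄ : (LinkGamma E lab).Adj d (xgen i j, false))
    (hc : (xgen i j, false) ≠ c) (had : a ≠ d) : False := by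
  obtain ⟨g, hg, rfl⟩ := linkGamma_adj_xgen h₁
  obtain ⟨h, hh, rfl⟩ := linkGamma_adj_xgen h₄.symm
  have hgh : g ≠ h := fun heq => had (heq ▸ rfl)
  rcases linkGamma_adj_of_false hg.ne_xgen h₂ with ⟨e₁, w, hwg, rfl⟩ | ⟨i', j', hg', rfl⟩
  · obtain ⟨e₂, w', hwh, hw⟩ | ⟨_, _, -, hw⟩ := linkGamma_adj_of_false hh.ne_xgen h₃.symm
    swap
    · simp at hw
    obtain rfl : w = w' := by simpa using hw
    obtain rfl := IsEdgeGen.edge_eq_of_triangle hsimple htf (hwg.ne hirr (hlab _ _ hwg.1))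
      (hwh.ne hirr (hlab _ _ hwh.1)) hgh hwg.isEdgeGen_left hwg.isEdgeGen_right
      hwh.isEdgeGen_left hwh.isEdgeGen_right hg hh
    exact hgh (hwg.right_unique hirr hwh)
  · obtain ⟨h', hh', hhh⟩ := linkGamma_adj_xgen h₃
    obtain rfl : h = h' := by simpa using hhh
    obtain ⟨rfl, rfl⟩ : i = i' ∧ j = j' := by simpa using hg.edge_eq_of_ne hsimple hh hg' hh' hgh
    exact hc rfl

lemma linkGamma_not_fourCycle_xgen_true (hirr : ∀ i, ¬E i i)
    (hsimple : ∀ i j, E i j → ¬E j i) (hlab : ∀ i j, E i j → 2 ≤ lab i j)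
    (htf : TriangleFree E) {i j : ι} {a c d : GammaVert ι}
    (h₁ : (LinkGamma E lab).Adj (xgen i j, true) a) (h₂ : (LinkGamma E lab).Adj a c)
    (h₃ : (LinkGamma E lab).Adj c d) (h₄ : (LinkGamma E lab).Adj d (xgen i j, true))
    (hc : (xgen i j, true) ≠ c) (had : a ≠ d) : False := by
  obtain ⟨g, hg, rfl⟩ := linkGamma_adj_xgen h₁
  obtain ⟨h, hh, rfl⟩ := linkGamma_adj_xgen h₄.symm
  have hgh : g ≠ h := fun heq => had (heq ▸ rfl)
  rcases linkGamma_adj_of_true hg.ne_xgen h₂ with ⟨e₁, w, hgw, rfl⟩ | ⟨i', j', hg', rfl⟩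
  · obtain ⟨e₂, w', hhw, hw⟩ | ⟨_, _, -, hw⟩ := linkGamma_adj_of_true hh.ne_xgen h₃.symm
    swap
    · simp at hw
    obtain rfl : w = w' := by simpa using hw
    obtain rfl := IsEdgeGen.edge_eq_of_triangle hsimple htf (hgw.ne hirr (hlab _ _ hgw.1)).symm
      (hhw.ne hirr (hlab _ _ hhw.1)).symm hgh hgw.isEdgeGen_right hgw.isEdgeGen_left
      hhw.isEdgeGen_right hhw.isEdgeGen_left hg hh
    exact hgh (hgw.left_unique hirr hhw)
  · obtain ⟨h', hh', hhh⟩ := linkGamma_adj_xgen h₃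
    obtain rfl : h = h' := by simpa using hhh
    obtain ⟨rfl, rfl⟩ : i = i' ∧ j = j' := by simpa using hg.edge_eq_of_ne hsimple hh hg' hh' hgh
    exact hc rfl

lemma linkGamma_fst_ne_xgen_of_fourCycle (hirr : ∀ i, ¬E i i)
    (hsimple : ∀ i j, E i j → ¬E j i) (hlab : ∀ i j, E i j → 2 ≤ lab i j)
    (htf : TriangleFree E) {v a c d : GammaVert ι}
    (h₁ : (LinkGamma E lab).Adj v a) (h₂ : (LinkGamma E lab).Adj a c)
    (h₃ : (LinkGamma E lab).Adj c d) (h₄ : (LinkGamma E lab).Adj d v)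
    (hc : v ≠ c) (had : a ≠ d) (i j : ι) : v.1 ≠ xgen i j := by
  obtain ⟨g, b⟩ := v
  rintro (rfl : g = xgen i j)
  cases b
  · exact linkGamma_not_fourCycle_xgen_false hirr hsimple hlab htf h₁ h₂ h₃ h₄ hc had
  · exact linkGamma_not_fourCycle_xgen_true hirr hsimple hlab htf h₁ h₂ h₃ h₄ hc had

end FourCycles

theorem four_cycles_all_middle_general {ι : Type*}
    (E : ι → ι → Prop) (lab : ι → ι → ℕ)
    (hirr : ∀ i, ¬E i i) (hsimple : ∀ i j, E i j → ¬E j i)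
    (hlab : ∀ i j, E i j → 3 ≤ lab i j) (htf : TriangleFree E) :
    ∀ (v : GammaVert ι) (w : (LinkGamma E lab).Walk v v),
      w.IsCycle → w.length = 4 →
        ∀ d ∈ w.darts, IsMiddle d.toProd.1 d.toProd.2 := by
  intro v w hw hlen d hd
  have hlab₂ (i j : ι) (hE : E i j) : 2 ≤ lab i j := Nat.le_of_succ_le (hlab i j hE)
  have hx (u : GammaVert ι) (hu : u ∈ w.support) : ∀ i j, u.1 ≠ xgen i j := by
    obtain ⟨a, b, c, h₁, h₂, h₃, h₄, hub, hac⟩ :=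
      hw.exists_adj_of_length_eq_four_of_mem_support hlen hu
    exact linkGamma_fst_ne_xgen_of_fourCycle hirr hsimple hlab₂ htf h₁ h₂ h₃ h₄ hub hac
  exact isMiddle_of_linkGamma_adj d.adj (hx _ (w.dart_fst_mem_support_of_mem_darts hd))
    (hx _ (w.dart_snd_mem_support_of_mem_darts hd))

/-- If `Γ` is a finite directed simple graph with edge labels at least 3
and no triangles, then every embedded cycle of length 4 in `L_Γ` consists entirely of
middle edges. -/
theorem four_cycles_all_middle {ι : Type*} [Fintype ι] [DecidableEq ι]
    (E : ι → ι → Prop) (lab : ι → ι → ℕ)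
    (hirr : ∀ i, ¬E i i) (hsimple : ∀ i j, E i j → ¬E j i)
    (hlab : ∀ i j, E i j → 3 ≤ lab i j) (htf : TriangleFree E) :
    ∀ (v : GammaVert ι) (w : (LinkGamma E lab).Walk v v),
      w.IsCycle → w.length = 4 →
        ∀ d ∈ w.darts, IsMiddle d.toProd.1 d.toProd.2 :=
  four_cycles_all_middle_general E lab hirr hsimple hlab htf
end

section
/- Let Γ be a finite triangle-free directed graph with edge labels ≥ 3. Assign length π/2 to each middle edge of L_Γ and length π/4 to each non-middle edge. Then every embedded cycle in L_Γ has total length at least 2π. -/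
instance {ι : Type*} (u v : GammaVert ι) : Decidable (IsMiddle u v) := by
  unfold IsMiddle; infer_instance

/-- The length of a link edge in the metric coming from right isoceles triangles:
`π/2` for middle edges and `π/4` for the other edges. -/
noncomputable def edgeWeight {ι : Type*} (u v : GammaVert ι) : ℝ :=
  if IsMiddle u v then Real.pi / 2 else Real.pi / 4

/-! Every edge of `L_Γ` joins two consecutive levels, so cycles have even length, and an edge is a
middle edge exactly when it changes the bar. A closed walk of length `ℓ` therefore has an even
number `m` of middle edges and total length `π/4 · (ℓ + m)`, and it remains to see `ℓ + m ≥ 8`.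

Without its middle edges, each half of `L_Γ` (barred or unbarred) is the bipartite graph joining
`x_{ij}` to the generators of the piece of `i → j`. Two pieces share at most one generator, since
`Γ` has no 2-cycles, and three pieces sharing generators pairwise give a triangle of `Γ`; so a
6-cycle of `L_Γ` must leave its half (`m ≥ 2`). In a 4-cycle every edge is a middle edge: a
non-middle edge ends at some `x_{ij}`, and the opposite vertex would then be a common neighbour of
two generators of one piece, i.e. a second `x_{pq}`, a common successor or a common predecessor in
the cyclic orders of the pieces, each of which forces a 2-cycle or a triangle in `Γ`. -/

namespace SimpleGraph.Walk

variable {V : Type*} {G : SimpleGraph V}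

theorem even_countP_darts_iff (f : V → Bool) {u v : V} (w : G.Walk u v) :
    Even (w.darts.countP fun d => f d.fst != f d.snd) ↔ f u = f v := by
  induction w with
  | nil => simp
  | @cons a b c _ p ih =>
    rw [darts_cons, List.countP_cons]
    cases ha : f a <;> cases hb : f b <;> cases hc : f c <;> simp_all [Nat.even_add_one]

theorem apply_eq_of_mem_support {α : Type*} {f : V → α} {u v : V} (w : G.Walk u v)
    (hw : ∀ d ∈ w.darts, f d.fst = f d.snd) {x : V} (hx : x ∈ w.support) : f x = f u := by
  induction w with
  | nil => rw [support_nil, List.mem_singleton] at hx; rw [hx]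
  | @cons a b c hab p ih =>
    rw [support_cons, List.mem_cons] at hx
    rcases hx with rfl | hx
    · rfl
    · rw [ih (fun d hd => hw d (by simp [hd])) hx]
      exact (hw ⟨(a, b), hab⟩ (by simp)).symm

variable {u : V} (w : G.Walk u u)

theorem getVert_mod_add_one (hw : 0 < w.length) (i : ℕ) :
    w.getVert (i % w.length + 1) = w.getVert ((i + 1) % w.length) := by
  rw [← Nat.mod_add_mod]
  have hi : i % w.length + 1 ≤ w.length := Nat.mod_lt i hw
  rcases hi.lt_or_eq with h | h
  · rw [Nat.mod_eq_of_lt h]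
  · rw [h, getVert_length, Nat.mod_self, getVert_zero]

theorem adj_getVert_mod (hw : 0 < w.length) (i : ℕ) :
    G.Adj (w.getVert (i % w.length)) (w.getVert ((i + 1) % w.length)) :=
  w.getVert_mod_add_one hw i ▸ w.adj_getVert_succ (Nat.mod_lt i hw)

theorem exists_getVert_mod_of_mem_darts {d : G.Dart} (hd : d ∈ w.darts) :
    ∃ n, d.fst = w.getVert (n % w.length) ∧ d.snd = w.getVert ((n + 1) % w.length) := by
  obtain ⟨n, hn, rfl⟩ := List.mem_iff_getElem.1 hd
  have hlt : n < w.length := w.length_darts ▸ hn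
  refine ⟨n, ?_, ?_⟩ <;> rw [darts_getElem_eq_getVert]
  · rw [Nat.mod_eq_of_lt hlt]
  · rw [← w.getVert_mod_add_one (by omega), Nat.mod_eq_of_lt hlt]

theorem IsCycle.getVert_mod_ne {w : G.Walk u u} (hw : w.IsCycle) {i j : ℕ}
    (h : i % w.length ≠ j % w.length) : w.getVert (i % w.length) ≠ w.getVert (j % w.length) := by
  have hL : 0 < w.length := by have := hw.three_le_length; omega
  have hi := Nat.mod_lt i hL
  have hj := Nat.mod_lt j hL
  exact fun e => h (hw.getVert_injOn' (by simp only [Set.mem_ofPred_eq]; omega)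
    (by simp only [Set.mem_ofPred_eq]; omega) e)

end SimpleGraph.Walk

lemma TriangleFree.false_of_common_neighbor {ι : Type*} {E : ι → ι → Prop} (hirr : ∀ i, ¬E i i)
    (htf : TriangleFree E) {s s' t : ι} (hss' : s ≠ s') (h : E s s' ∨ E s' s) (ht : E s t ∨ E t s)
    (ht' : E s' t ∨ E t s') : False := by
  refine htf ⟨s, s', t, hss', ?_, ?_, h, ht'.imp id id, ht⟩ <;> rintro rfl <;> simp_all

namespace LinkGamma

open GammaGen

variable {ι : Type*} {E : ι → ι → Prop} {lab : ι → ι → ℕ}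

def InPiece (lab : ι → ι → ℕ) (i j : ι) (g : GammaGen ι) : Prop :=
  g = vgen i ∨ g = vgen j ∨ ∃ k, 3 ≤ k ∧ k ≤ lab i j ∧ g = dgen i j k

/-- `h` follows `g` in the cyclic sequence `a_i, a_j, d₃, …, d_m` of the piece of an edge
`i → j` of label `m`. -/
def IsSucc (E : ι → ι → Prop) (lab : ι → ι → ℕ) (g h : GammaGen ι) : Prop :=
  (∃ i j, E i j ∧ g = vgen i ∧ h = vgen j) ∨
  (∃ i j, E i j ∧ g = vgen j ∧ h = dgen i j 3) ∨
  (∃ i j k, E i j ∧ 3 ≤ k ∧ k + 1 ≤ lab i j ∧ g = dgen i j k ∧ h = dgen i j (k + 1)) ∨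
  (∃ i j, E i j ∧ g = dgen i j (lab i j) ∧ h = vgen i)

lemma inPiece_gSeq {i j : ι} {k : ℕ} (hk : 1 ≤ k) (hkm : k ≤ lab i j) :
    InPiece lab i j (gSeq i j k) := by
  unfold gSeq InPiece
  split_ifs
  · exact .inl rfl
  · exact .inr (.inl rfl)
  · exact .inr (.inr ⟨k, by omega, hkm, rfl⟩)

lemma isSucc_gSeq {i j : ι} {k : ℕ} (hE : E i j) (hm : 3 ≤ lab i j) (hk : 1 ≤ k)
    (hkm : k ≤ lab i j) : IsSucc E lab (gSeq i j k) (gSeq i j (k % lab i j + 1)) := by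
  rcases hkm.lt_or_eq with hkm | rfl
  · rw [Nat.mod_eq_of_lt hkm]
    match k, hk with
    | 1, _ => exact .inl ⟨i, j, hE, rfl, rfl⟩
    | 2, _ => exact .inr (.inl ⟨i, j, hE, rfl, rfl⟩)
    | k + 3, _ => exact .inr (.inr (.inl ⟨i, j, k + 3, hE, by omega, hkm, rfl, rfl⟩))
  · rw [Nat.mod_self]
    refine .inr (.inr (.inr ⟨i, j, hE, ?_, rfl⟩))
    simp only [gSeq, if_neg (show lab i j ≠ 1 by omega), if_neg (show lab i j ≠ 2 by omega)]

lemma InPiece.ne_xgen {i j p q : ι} {g : GammaGen ι} (h : InPiece lab i j g) :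
    g ≠ xgen p q := by
  rcases h with rfl | rfl | ⟨k, -, -, rfl⟩ <;> simp

lemma IsSucc.left_ne_xgen {g h : GammaGen ι} (hs : IsSucc E lab g h) (p q : ι) :
    g ≠ xgen p q := by
  rintro rfl; simp [IsSucc] at hs

lemma IsSucc.right_ne_xgen {g h : GammaGen ι} (hs : IsSucc E lab g h) (p q : ι) :
    h ≠ xgen p q := by
  rintro rfl; simp [IsSucc] at hs

lemma adj_of_mem_of_mem {i j s t : ι} (hE : E i j) (hs : s = i ∨ s = j) (ht : t = i ∨ t = j)
    (hst : s ≠ t) : E s t ∨ E t s := by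
  rcases hs with rfl | rfl <;> rcases ht with rfl | rfl <;> simp_all

lemma InPiece.vgen_mem {i j t : ι} (h : InPiece lab i j (vgen t)) : t = i ∨ t = j := by
  rcases h with h | h | ⟨k, -, -, h⟩ <;> simp_all

lemma InPiece.dgen_eq {i j p q : ι} {k : ℕ} (h : InPiece lab i j (dgen p q k)) :
    p = i ∧ q = j := by
  rcases h with h | h | ⟨k, -, -, h⟩ <;> simp_all

lemma exists_vgen_of_inPiece_of_inPiece {i j p q : ι} {g : GammaGen ι}
    (hne : (i, j) ≠ (p, q)) (h1 : InPiece lab i j g) (h2 : InPiece lab p q g) :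
    ∃ t, g = vgen t ∧ (t = i ∨ t = j) ∧ (t = p ∨ t = q) := by
  rcases h1 with rfl | rfl | ⟨k, -, -, rfl⟩
  · exact ⟨i, rfl, .inl rfl, h2.vgen_mem⟩
  · exact ⟨j, rfl, .inr rfl, h2.vgen_mem⟩
  · obtain ⟨rfl, rfl⟩ := h2.dgen_eq
    exact absurd rfl hne

lemma eq_of_inPiece_of_inPiece (hsimple : ∀ i j, E i j → ¬E j i) {i j p q : ι}
    {g g' : GammaGen ι} (hE : E i j) (hE' : E p q) (hne : (i, j) ≠ (p, q))
    (hg : InPiece lab i j g) (hgp : InPiece lab p q g)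
    (hg' : InPiece lab i j g') (hgp' : InPiece lab p q g') : g = g' := by
  obtain ⟨t, rfl, ht, htp⟩ := exists_vgen_of_inPiece_of_inPiece hne hg hgp
  obtain ⟨s, rfl, hs, hsp⟩ := exists_vgen_of_inPiece_of_inPiece hne hg' hgp'
  rcases ht with rfl | rfl <;> rcases hs with rfl | rfl <;> rcases htp with rfl | rfl <;>
    rcases hsp with h | h <;> simp_all

lemma IsSucc.eq_of_right_eq_dgen {g : GammaGen ι} {p q : ι} {k : ℕ}
    (hs : IsSucc E lab g (dgen p q k)) : g = if k = 3 then vgen q else dgen p q (k - 1) := by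
  rcases hs with ⟨_, _, _, _, h⟩ | ⟨_, _, _, rfl, h⟩ | ⟨_, _, k', _, hk, _, rfl, h⟩ |
      ⟨_, _, _, _, h⟩ <;>
    simp only [dgen.injEq, reduceCtorEq] at h
  · obtain ⟨rfl, rfl, rfl⟩ := h; rfl
  · obtain ⟨rfl, rfl, rfl⟩ := h
    rw [if_neg (by omega), Nat.add_sub_cancel]

lemma IsSucc.eq_of_right_eq_vgen {g : GammaGen ι} {t : ι} (hs : IsSucc E lab g (vgen t)) :
    (∃ s, E s t ∧ g = vgen s) ∨ ∃ r, E t r ∧ g = dgen t r (lab t r) := by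
  rcases hs with ⟨s, _, hs, rfl, h⟩ | ⟨_, _, _, _, h⟩ | ⟨_, _, _, _, _, _, _, h⟩ |
      ⟨_, r, hr, rfl, h⟩ <;>
    simp only [vgen.injEq, reduceCtorEq] at h <;> subst h
  · exact .inl ⟨s, hs, rfl⟩
  · exact .inr ⟨r, hr, rfl⟩

lemma IsSucc.eq_of_left_eq_dgen {h : GammaGen ι} {p q : ι} {k : ℕ}
    (hs : IsSucc E lab (dgen p q k) h) : h = if k = lab p q then vgen p else dgen p q (k + 1) := by
  rcases hs with ⟨_, _, _, h', -⟩ | ⟨_, _, _, h', -⟩ | ⟨_, _, k', _, _, hk, h', rfl⟩ |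
      ⟨_, _, _, h', rfl⟩ <;>
    simp only [dgen.injEq, reduceCtorEq] at h'
  · obtain ⟨rfl, rfl, rfl⟩ := h'
    rw [if_neg (by omega)]
  · obtain ⟨rfl, rfl, rfl⟩ := h'
    rw [if_pos rfl]

lemma IsSucc.eq_of_left_eq_vgen {h : GammaGen ι} {s : ι} (hs : IsSucc E lab (vgen s) h) :
    (∃ t, E s t ∧ h = vgen t) ∨ ∃ p, E p s ∧ h = dgen p s 3 := by
  rcases hs with ⟨_, t, ht, h', rfl⟩ | ⟨p, _, hp, h', rfl⟩ | ⟨_, _, _, _, _, _, h', -⟩ |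
      ⟨_, _, _, h', -⟩ <;>
    simp only [vgen.injEq, reduceCtorEq] at h' <;> subst h'
  · exact .inl ⟨t, ht, rfl⟩
  · exact .inr ⟨p, hp, rfl⟩

lemma not_edge_to_source (hirr : ∀ i, ¬E i i) (hsimple : ∀ i j, E i j → ¬E j i) {i j s : ι}
    (hE : E i j) (hs : s = i ∨ s = j) : ¬E s i := by
  rcases hs with rfl | rfl
  exacts [hirr s, hsimple _ _ hE]

lemma not_edge_from_target (hirr : ∀ i, ¬E i i) (hsimple : ∀ i j, E i j → ¬E j i) {i j t : ι}
    (hE : E i j) (ht : t = i ∨ t = j) : ¬E j t := by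
  rcases ht with rfl | rfl
  exacts [hsimple _ _ hE, hirr t]

lemma IsSucc.left_eq_of_inPiece (hirr : ∀ i, ¬E i i) (hsimple : ∀ i j, E i j → ¬E j i)
    (htf : TriangleFree E) {i j : ι} {g g' h : GammaGen ι} (hE : E i j)
    (hg : InPiece lab i j g) (hg' : InPiece lab i j g')
    (hs : IsSucc E lab g h) (hs' : IsSucc E lab g' h) : g = g' := by
  cases h with
  | xgen => exact absurd rfl (hs.right_ne_xgen _ _)
  | dgen => exact hs.eq_of_right_eq_dgen.trans hs'.eq_of_right_eq_dgen.symm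
  | vgen t =>
    rcases hs.eq_of_right_eq_vgen with ⟨s, hst, rfl⟩ | ⟨r, htr, rfl⟩ <;>
      rcases hs'.eq_of_right_eq_vgen with ⟨s', hst', rfl⟩ | ⟨r', htr', rfl⟩
    · by_contra hne
      have hss' : s ≠ s' := fun h => hne (h ▸ rfl)
      exact TriangleFree.false_of_common_neighbor hirr htf hss'
        (adj_of_mem_of_mem hE hg.vgen_mem hg'.vgen_mem hss') (.inl hst) (.inl hst')
    · obtain ⟨rfl, rfl⟩ := hg'.dgen_eq
      exact absurd hst (not_edge_to_source hirr hsimple hE hg.vgen_mem)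
    · obtain ⟨rfl, rfl⟩ := hg.dgen_eq
      exact absurd hst' (not_edge_to_source hirr hsimple hE hg'.vgen_mem)
    · obtain ⟨-, rfl⟩ := hg.dgen_eq
      obtain ⟨-, rfl⟩ := hg'.dgen_eq
      rfl

lemma IsSucc.right_eq_of_inPiece (hirr : ∀ i, ¬E i i) (hsimple : ∀ i j, E i j → ¬E j i)
    (htf : TriangleFree E) {i j : ι} {g h h' : GammaGen ι} (hE : E i j)
    (hh : InPiece lab i j h) (hh' : InPiece lab i j h')
    (hs : IsSucc E lab g h) (hs' : IsSucc E lab g h') : h = h' := by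
  cases g with
  | xgen => exact absurd rfl (hs.left_ne_xgen _ _)
  | dgen => exact hs.eq_of_left_eq_dgen.trans hs'.eq_of_left_eq_dgen.symm
  | vgen s =>
    rcases hs.eq_of_left_eq_vgen with ⟨t, hst, rfl⟩ | ⟨p, hps, rfl⟩ <;>
      rcases hs'.eq_of_left_eq_vgen with ⟨t', hst', rfl⟩ | ⟨p', hps', rfl⟩
    · by_contra hne
      have htt' : t ≠ t' := fun h => hne (h ▸ rfl)
      exact TriangleFree.false_of_common_neighbor hirr htf htt'
        (adj_of_mem_of_mem hE hh.vgen_mem hh'.vgen_mem htt') (.inr hst) (.inr hst')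
    · obtain ⟨rfl, rfl⟩ := hh'.dgen_eq
      exact absurd hst (not_edge_from_target hirr hsimple hE hh.vgen_mem)
    · obtain ⟨rfl, rfl⟩ := hh.dgen_eq
      exact absurd hst' (not_edge_from_target hirr hsimple hE hh'.vgen_mem)
    · obtain ⟨rfl, -⟩ := hh.dgen_eq
      obtain ⟨rfl, -⟩ := hh'.dgen_eq
      rfl

/-- The barred and the unbarred half of the link are both copies of this graph, which joins
`x_{ij}` to the generators of the piece of `i → j`. -/
def sheetGraph (E : ι → ι → Prop) (lab : ι → ι → ℕ) : SimpleGraph (GammaGen ι) :=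
  SimpleGraph.fromRel fun g h => ∃ i j, E i j ∧ g = xgen i j ∧ InPiece lab i j h

lemma sheetGraph_adj_xgen_iff {i j : ι} {g : GammaGen ι} :
    (sheetGraph E lab).Adj (xgen i j) g ↔ E i j ∧ InPiece lab i j g := by
  constructor
  · rintro ⟨-, ⟨p, q, hE, h, hg⟩ | ⟨p, q, -, rfl, hg⟩⟩
    · cases h; exact ⟨hE, hg⟩
    · exact absurd rfl hg.ne_xgen
  · rintro ⟨hE, hg⟩
    exact ⟨hg.ne_xgen.symm, .inl ⟨i, j, hE, rfl, hg⟩⟩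

lemma sheetGraph_adj_of_inPiece {i j : ι} {g h : GammaGen ι} (hg : InPiece lab i j g)
    (hgh : (sheetGraph E lab).Adj g h) : ∃ p q, h = xgen p q ∧ E p q ∧ InPiece lab p q g := by
  rcases hgh with ⟨-, ⟨p, q, -, rfl, -⟩ | ⟨p, q, hE, rfl, hp⟩⟩
  · exact absurd rfl hg.ne_xgen
  · exact ⟨p, q, rfl, hE, hp⟩

lemma adj_cases (hlab : ∀ i j, E i j → 3 ≤ lab i j) {u v : GammaVert ι}
    (h : (LinkGamma E lab).Adj u v) :
    (u.2 = v.2 ∧ (sheetGraph E lab).Adj u.1 v.1) ∨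
    (u.2 = true ∧ v.2 = false ∧ IsSucc E lab u.1 v.1) ∨
    (u.2 = false ∧ v.2 = true ∧ IsSucc E lab v.1 u.1) := by
  have of_rel : ∀ {u v}, linkRelGamma E lab u v →
      (u.2 = v.2 ∧ (sheetGraph E lab).Adj u.1 v.1) ∨
      (u.2 = true ∧ v.2 = false ∧ IsSucc E lab u.1 v.1) ∨
      (u.2 = false ∧ v.2 = true ∧ IsSucc E lab v.1 u.1) := by
    rintro u v ⟨t, ⟨i, j, hE, k, hk, hkm, rfl⟩, hc | hc | hc⟩ <;> rw [Prod.mk.injEq] at hc <;>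
      obtain ⟨rfl, rfl⟩ := hc
    · exact .inr (.inl ⟨rfl, rfl, isSucc_gSeq hE (hlab i j hE) hk hkm⟩)
    · exact .inl ⟨rfl, sheetGraph_adj_xgen_iff.2 ⟨hE, inPiece_gSeq hk hkm⟩⟩
    · have := Nat.mod_lt k (show 0 < lab i j by omega)
      exact .inl ⟨rfl, (sheetGraph_adj_xgen_iff.2 ⟨hE, inPiece_gSeq (by omega) this⟩).symm⟩
  rw [LinkGamma, SimpleGraph.fromRel_adj] at h
  rcases h.2 with h | h
  · exact of_rel h
  · rcases of_rel h with ⟨hb, hs⟩ | ⟨hv, hu, hs⟩ | ⟨hv, hu, hs⟩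
    exacts [.inl ⟨hb.symm, hs.symm⟩, .inr (.inr ⟨hu, hv, hs⟩), .inr (.inl ⟨hu, hv, hs⟩)]

lemma snd_eq_and_inPiece_of_adj_xgen (hlab : ∀ i j, E i j → 3 ≤ lab i j) {i j : ι} {b : Bool}
    {v : GammaVert ι} (h : (LinkGamma E lab).Adj (xgen i j, b) v) :
    v.2 = b ∧ E i j ∧ InPiece lab i j v.1 := by
  rcases adj_cases hlab h with ⟨hb, hs⟩ | ⟨-, -, hs⟩ | ⟨-, -, hs⟩
  · exact ⟨hb.symm, sheetGraph_adj_xgen_iff.1 hs⟩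
  · exact absurd rfl (hs.left_ne_xgen _ _)
  · exact absurd rfl (hs.right_ne_xgen _ _)

lemma lvlGamma_of_ne_xgen {g : GammaGen ι} (hg : ∀ i j, g ≠ xgen i j) (b : Bool) :
    lvlGamma (g, b) = if b then 2 else 3 := by
  cases g with
  | xgen i j => exact absurd rfl (hg i j)
  | _ => cases b <;> rfl

lemma lvlGamma_xgen (i j : ι) (b : Bool) : lvlGamma (xgen i j, b) = if b then 1 else 4 := by
  cases b <;> rfl

lemma lvlGamma_le_two_iff (v : GammaVert ι) : lvlGamma v ≤ 2 ↔ v.2 = true := by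
  rcases v with ⟨_ | _ | _, _ | _⟩ <;> simp [lvlGamma]

lemma lvlGamma_adj (hlab : ∀ i j, E i j → 3 ≤ lab i j) {u v : GammaVert ι}
    (h : (LinkGamma E lab).Adj u v) :
    lvlGamma u = lvlGamma v + 1 ∨ lvlGamma v = lvlGamma u + 1 := by
  obtain ⟨g, b⟩ := u
  obtain ⟨h, b'⟩ := v
  rcases adj_cases hlab h with ⟨rfl, -, ⟨i, j, -, rfl, hp⟩ | ⟨i, j, -, rfl, hp⟩⟩ |
      ⟨rfl, rfl, hs⟩ | ⟨rfl, rfl, hs⟩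
  · rw [lvlGamma_xgen, lvlGamma_of_ne_xgen fun _ _ => hp.ne_xgen]; cases b <;> simp
  · rw [lvlGamma_xgen, lvlGamma_of_ne_xgen fun _ _ => hp.ne_xgen]; cases b <;> simp
  · rw [lvlGamma_of_ne_xgen hs.left_ne_xgen, lvlGamma_of_ne_xgen hs.right_ne_xgen]; simp
  · rw [lvlGamma_of_ne_xgen hs.left_ne_xgen, lvlGamma_of_ne_xgen hs.right_ne_xgen]; simp

lemma isMiddle_iff_of_adj (hlab : ∀ i j, E i j → 3 ≤ lab i j) {u v : GammaVert ι}
    (h : (LinkGamma E lab).Adj u v) : IsMiddle u v ↔ u.2 ≠ v.2 := by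
  have hu := lvlGamma_le_two_iff u
  have hv := lvlGamma_le_two_iff v
  have := lvlGamma_adj hlab h
  unfold IsMiddle
  obtain ⟨g, _ | _⟩ := u <;> obtain ⟨g', _ | _⟩ := v <;> simp_all <;> omega

lemma sum_edgeWeight_darts (hlab : ∀ i j, E i j → 3 ≤ lab i j) {u v : GammaVert ι}
    (w : (LinkGamma E lab).Walk u v) :
    (w.darts.map fun d => edgeWeight d.toProd.1 d.toProd.2).sum =
      Real.pi / 4 * (w.length + w.darts.countP fun d => d.fst.2 != d.snd.2) := by
  induction w with
  | nil => simp
  | @cons a b c h p ih =>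
    rw [SimpleGraph.Walk.darts_cons, List.map_cons, List.sum_cons, ih, List.countP_cons,
      SimpleGraph.Walk.length_cons, edgeWeight]
    by_cases hm : IsMiddle a b
    · have hab := (isMiddle_iff_of_adj hlab h).1 hm
      simp [hm, hab]
      ring
    · have hab : a.2 = b.2 := not_not.1 (mt (isMiddle_iff_of_adj hlab h).2 hm)
      simp [hm, hab]
      ring

lemma even_length (hlab : ∀ i j, E i j → 3 ≤ lab i j) {u : GammaVert ι}
    (w : (LinkGamma E lab).Walk u u) : Even w.length :=
  ((SimpleGraph.Coloring.mk (fun v => decide (lvlGamma v % 2 = 0)) fun h => by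
    rcases lvlGamma_adj hlab h with e | e <;> rw [e] <;> simp <;> omega).even_length_iff_congr
    w).2 Iff.rfl

lemma false_of_four_cycle_xgen (hirr : ∀ i, ¬E i i) (hsimple : ∀ i j, E i j → ¬E j i)
    (htf : TriangleFree E) (hlab : ∀ i j, E i j → 3 ≤ lab i j) {i j : ι} {β : Bool}
    {b c d : GammaVert ι} (hab : (LinkGamma E lab).Adj (xgen i j, β) b)
    (hbc : (LinkGamma E lab).Adj b c) (hcd : (LinkGamma E lab).Adj c d)
    (hda : (LinkGamma E lab).Adj d (xgen i j, β)) (hac : (xgen i j, β) ≠ c) (hbd : b ≠ d) :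
    False := by
  obtain ⟨hb, hE, hb1⟩ := snd_eq_and_inPiece_of_adj_xgen hlab hab
  obtain ⟨hd, -, hd1⟩ := snd_eq_and_inPiece_of_adj_xgen hlab hda.symm
  have hne : b.1 ≠ d.1 := fun h => hbd (Prod.ext h (hb.trans hd.symm))
  rcases adj_cases hlab hbc with ⟨hbc2, hs⟩ | ⟨hb2, hc2, hs⟩ | ⟨hb2, hc2, hs⟩ <;>
    rcases adj_cases hlab hcd with ⟨hcd2, hs'⟩ | ⟨hc2', hd2, hs'⟩ | ⟨hc2', hd2, hs'⟩ <;>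
    try (exfalso; simp_all; done)
  · obtain ⟨p, q, hc, hE', hbp⟩ := sheetGraph_adj_of_inPiece hb1 hs
    rw [hc, sheetGraph_adj_xgen_iff] at hs'
    by_cases hpq : (i, j) = (p, q)
    · obtain ⟨rfl, rfl⟩ := Prod.mk.inj hpq
      exact hac (Prod.ext hc.symm (hb.symm.trans hbc2))
    · exact hne (eq_of_inPiece_of_inPiece hsimple hE hE' hpq hb1 hbp hd1 hs'.2)
  · exact hne (hs.left_eq_of_inPiece hirr hsimple htf hE hb1 hd1 hs')
  · exact hne (hs.right_eq_of_inPiece hirr hsimple htf hE hb1 hd1 hs')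

lemma snd_ne_of_four_cycle (hirr : ∀ i, ¬E i i) (hsimple : ∀ i j, E i j → ¬E j i)
    (htf : TriangleFree E) (hlab : ∀ i j, E i j → 3 ≤ lab i j) {a b c d : GammaVert ι}
    (hab : (LinkGamma E lab).Adj a b) (hbc : (LinkGamma E lab).Adj b c)
    (hcd : (LinkGamma E lab).Adj c d) (hda : (LinkGamma E lab).Adj d a)
    (hac : a ≠ c) (hbd : b ≠ d) : a.2 ≠ b.2 := by
  intro hsame
  rcases adj_cases hlab hab with ⟨-, -, ⟨i, j, -, ha, -⟩ | ⟨i, j, -, hb, -⟩⟩ | ⟨ha, hb, -⟩ |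
      ⟨ha, hb, -⟩
  · obtain ⟨a, β⟩ := a
    obtain rfl : a = xgen i j := ha
    exact false_of_four_cycle_xgen hirr hsimple htf hlab hab hbc hcd hda hac hbd
  · obtain ⟨b, β⟩ := b
    obtain rfl : b = xgen i j := hb
    exact false_of_four_cycle_xgen hirr hsimple htf hlab hab.symm hda.symm hcd.symm hbc.symm
      hbd hac
  all_goals simp_all

lemma sheetGraph_adj_of_adj (hlab : ∀ i j, E i j → 3 ≤ lab i j) {u v : GammaVert ι}
    (h : (LinkGamma E lab).Adj u v) (huv : u.2 = v.2) : (sheetGraph E lab).Adj u.1 v.1 := by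
  rcases adj_cases hlab h with ⟨-, hs⟩ | ⟨hu, hv, -⟩ | ⟨hu, hv, -⟩
  · exact hs
  all_goals simp_all

lemma false_of_six_cycle_xgen (htf : TriangleFree E) {i j : ι} {g₁ g₂ g₃ g₄ g₅ : GammaGen ι}
    (h₀₁ : (sheetGraph E lab).Adj (xgen i j) g₁) (h₁₂ : (sheetGraph E lab).Adj g₁ g₂)
    (h₂₃ : (sheetGraph E lab).Adj g₂ g₃) (h₃₄ : (sheetGraph E lab).Adj g₃ g₄)
    (h₄₅ : (sheetGraph E lab).Adj g₄ g₅) (h₅₀ : (sheetGraph E lab).Adj g₅ (xgen i j))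
    (n₀₂ : xgen i j ≠ g₂) (n₀₄ : xgen i j ≠ g₄) (n₂₄ : g₂ ≠ g₄)
    (n₁₃ : g₁ ≠ g₃) (n₃₅ : g₃ ≠ g₅) (n₁₅ : g₁ ≠ g₅) : False := by
  obtain ⟨hE, hg₁⟩ := sheetGraph_adj_xgen_iff.1 h₀₁
  obtain ⟨-, hg₅⟩ := sheetGraph_adj_xgen_iff.1 h₅₀.symm
  obtain ⟨p, q, rfl, hE', hg₁'⟩ := sheetGraph_adj_of_inPiece hg₁ h₁₂
  obtain ⟨-, hg₃⟩ := sheetGraph_adj_xgen_iff.1 h₂₃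
  obtain ⟨r, s, rfl, hE'', hg₃'⟩ := sheetGraph_adj_of_inPiece hg₃ h₃₄
  obtain ⟨-, hg₅'⟩ := sheetGraph_adj_xgen_iff.1 h₄₅
  obtain ⟨t₁, rfl, ht₁, ht₁'⟩ :=
    exists_vgen_of_inPiece_of_inPiece (by rintro ⟨⟩; exact n₀₂ rfl) hg₁ hg₁'
  obtain ⟨t₂, rfl, ht₂, ht₂'⟩ :=
    exists_vgen_of_inPiece_of_inPiece (by rintro ⟨⟩; exact n₂₄ rfl) hg₃ hg₃'
  obtain ⟨t₃, rfl, ht₃, ht₃'⟩ :=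
    exists_vgen_of_inPiece_of_inPiece (by rintro ⟨⟩; exact n₀₄ rfl) hg₅ hg₅'
  have n₁₂ : t₁ ≠ t₂ := fun h => n₁₃ (h ▸ rfl)
  have n₂₃ : t₂ ≠ t₃ := fun h => n₃₅ (h ▸ rfl)
  have n₁₃ : t₁ ≠ t₃ := fun h => n₁₅ (h ▸ rfl)
  exact htf ⟨t₁, t₂, t₃, n₁₂, n₁₃, n₂₃, adj_of_mem_of_mem hE' ht₁' ht₂ n₁₂,
    adj_of_mem_of_mem hE'' ht₂' ht₃' n₂₃, adj_of_mem_of_mem hE ht₁ ht₃ n₁₃⟩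

lemma false_of_six_cycle (htf : TriangleFree E) {g₀ g₁ g₂ g₃ g₄ g₅ : GammaGen ι}
    (h₀₁ : (sheetGraph E lab).Adj g₀ g₁) (h₁₂ : (sheetGraph E lab).Adj g₁ g₂)
    (h₂₃ : (sheetGraph E lab).Adj g₂ g₃) (h₃₄ : (sheetGraph E lab).Adj g₃ g₄)
    (h₄₅ : (sheetGraph E lab).Adj g₄ g₅) (h₅₀ : (sheetGraph E lab).Adj g₅ g₀)
    (n₀₂ : g₀ ≠ g₂) (n₀₄ : g₀ ≠ g₄) (n₂₄ : g₂ ≠ g₄)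
    (n₁₃ : g₁ ≠ g₃) (n₃₅ : g₃ ≠ g₅) (n₁₅ : g₁ ≠ g₅) : False := by
  rcases h₀₁.2 with ⟨i, j, -, rfl, -⟩ | ⟨i, j, -, rfl, -⟩
  · exact false_of_six_cycle_xgen htf h₀₁ h₁₂ h₂₃ h₃₄ h₄₅ h₅₀ n₀₂ n₀₄ n₂₄ n₁₃ n₃₅ n₁₅
  · exact false_of_six_cycle_xgen htf h₁₂ h₂₃ h₃₄ h₄₅ h₅₀ h₀₁ n₁₃ n₁₅ n₃₅ n₂₄ n₀₄.symm
      n₀₂.symm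

lemma snd_ne_of_mem_darts_of_length_eq_four (hirr : ∀ i, ¬E i i)
    (hsimple : ∀ i j, E i j → ¬E j i) (htf : TriangleFree E) (hlab : ∀ i j, E i j → 3 ≤ lab i j)
    {v : GammaVert ι} {w : (LinkGamma E lab).Walk v v} (hw : w.IsCycle) (h4 : w.length = 4)
    {d : (LinkGamma E lab).Dart} (hd : d ∈ w.darts) : d.fst.2 ≠ d.snd.2 := by
  obtain ⟨n, h₁, h₂⟩ := w.exists_getVert_mod_of_mem_darts hd
  have hL : 0 < w.length := by omega
  have hda := w.adj_getVert_mod hL (n + 3)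
  rw [show (n + 3 + 1) % w.length = n % w.length by rw [h4]; omega] at hda
  rw [h₁, h₂]
  exact snd_ne_of_four_cycle hirr hsimple htf hlab (w.adj_getVert_mod hL n)
    (w.adj_getVert_mod hL (n + 1)) (w.adj_getVert_mod hL (n + 2)) hda
    (hw.getVert_mod_ne (by rw [h4]; omega)) (hw.getVert_mod_ne (by rw [h4]; omega))

lemma exists_mem_darts_snd_ne_of_length_eq_six (htf : TriangleFree E)
    (hlab : ∀ i j, E i j → 3 ≤ lab i j) {v : GammaVert ι} {w : (LinkGamma E lab).Walk v v}
    (hw : w.IsCycle) (h6 : w.length = 6) : ∃ d ∈ w.darts, d.fst.2 ≠ d.snd.2 := by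
  by_contra! hsame
  have hL : 0 < w.length := by omega
  have hb (k : ℕ) : (w.getVert k).2 = v.2 :=
    w.apply_eq_of_mem_support hsame (w.getVert_mem_support k)
  have hadj (k : ℕ) : (sheetGraph E lab).Adj (w.getVert (k % 6)).1 (w.getVert ((k + 1) % 6)).1 :=
    h6 ▸ sheetGraph_adj_of_adj hlab (w.adj_getVert_mod hL k) ((hb _).trans (hb _).symm)
  have hne (k : ℕ) : (w.getVert (k % 6)).1 ≠ (w.getVert ((k + 2) % 6)).1 := by
    have := hw.getVert_mod_ne (i := k) (j := k + 2) (by rw [h6]; omega)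
    rw [h6] at this
    exact fun h => this (Prod.ext h ((hb _).trans (hb _).symm))
  exact false_of_six_cycle htf (hadj 0) (hadj 1) (hadj 2) (hadj 3) (hadj 4) (hadj 5)
    (hne 0) (hne 4).symm (hne 2) (hne 1) (hne 3) (hne 5).symm

lemma eight_le_length_add_countP (hirr : ∀ i, ¬E i i) (hsimple : ∀ i j, E i j → ¬E j i)
    (htf : TriangleFree E) (hlab : ∀ i j, E i j → 3 ≤ lab i j) {v : GammaVert ι}
    {w : (LinkGamma E lab).Walk v v} (hw : w.IsCycle) :
    8 ≤ w.length + w.darts.countP fun d => d.fst.2 != d.snd.2 := by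
  set m := w.darts.countP fun d => d.fst.2 != d.snd.2 with hm
  obtain ⟨k, hk⟩ := even_length hlab w
  obtain ⟨k', hk'⟩ : Even m := (w.even_countP_darts_iff Prod.snd).2 rfl
  have := hw.three_le_length
  rcases (show w.length = 4 ∨ w.length = 6 ∨ 8 ≤ w.length by omega) with h4 | h6 | h8
  · have : m = w.length := by
      rw [hm, ← w.length_darts, List.countP_eq_length]
      intro d hd
      simpa using snd_ne_of_mem_darts_of_length_eq_four hirr hsimple htf hlab hw h4 hd
    omega
  · have : 0 < m := by
      obtain ⟨d, hd, hne⟩ := exists_mem_darts_snd_ne_of_length_eq_six htf hlab hw h6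
      exact List.countP_pos_iff.2 ⟨d, hd, by simpa using hne⟩
    omega
  · omega

end LinkGamma

theorem weighted_cycles_two_pi_general {ι : Type*}
    (E : ι → ι → Prop) (lab : ι → ι → ℕ)
    (hirr : ∀ i, ¬E i i) (hsimple : ∀ i j, E i j → ¬E j i)
    (hlab : ∀ i j, E i j → 3 ≤ lab i j) (htf : TriangleFree E) :
    ∀ (v : GammaVert ι) (w : (LinkGamma E lab).Walk v v),
      w.IsCycle →
        2 * Real.pi ≤ (w.darts.map (fun d => edgeWeight d.toProd.1 d.toProd.2)).sum := by
  intro v w hw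
  have h8 : (8 : ℝ) ≤ w.length + w.darts.countP fun d => d.fst.2 != d.snd.2 := by
    exact_mod_cast LinkGamma.eight_le_length_add_countP hirr hsimple htf hlab hw
  rw [LinkGamma.sum_edgeWeight_darts hlab w]
  nlinarith [Real.pi_pos]

/-- If `Γ` is a finite triangle-free directed simple graph with edge
labels at least 3, and each middle edge of `L_Γ` is given length `π/2` while every
other edge is given length `π/4`, then every embedded cycle in `L_Γ` has total
length at least `2π`. -/
theorem weighted_cycles_two_pi {ι : Type*} [Fintype ι] [DecidableEq ι]
    (E : ι → ι → Prop) (lab : ι → ι → ℕ)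
    (hirr : ∀ i, ¬E i i) (hsimple : ∀ i j, E i j → ¬E j i)
    (hlab : ∀ i j, E i j → 3 ≤ lab i j) (htf : TriangleFree E) :
    ∀ (v : GammaVert ι) (w : (LinkGamma E lab).Walk v v),
      w.IsCycle →
        2 * Real.pi ≤ (w.darts.map (fun d => edgeWeight d.toProd.1 d.toProd.2)).sum :=
  weighted_cycles_two_pi_general E lab hirr hsimple hlab htf
end
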